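/- Let 𝔤 be a nonabelian finite simple Lie algebra over 𝔽_p of dimension d, and let A be a generating set. Suppose for some k the set A^k contains the X-multiples of a nonzero vector v, where X = {α ∈ 𝔽_p : αv ∈ A^k}. Then the set A^{2k+d} contains both (X+X)·v and (X·X)·w for some nonzero vector w ∈ 𝔤; consequently ℓ(A^{2k+d}) ≥ max{|X+X|, |X·X|}, where ℓ(S) denotes the maximum number of elements of S lying on a single line through the origin. -/

import Mathlib

/-!
Sums are immediate: `αv + βv ∈ A^k + A^k ⊆ A^{2k}`. For products, let `W_m` be the span of the
`x` with `X • x ⊆ A^{k+m}`. It contains `v`, increases with `m`, and `[a, W_m] ⊆ W_{m+1}` for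
`a ∈ A`. By dimension count the chain stalls at some `m < d`; then `W_m` is `ad A`-stable, hence
an ideal since `A` generates, hence everything by simplicity. As `𝔤` is centerless, some `x` with
`X • x ⊆ A^{k+d}` has `w := [v, x] ≠ 0`, and `(αβ) w = [αv, βx] ∈ A^{2k+d}`.
The line bound follows because `α ↦ α • u` is injective for `u ≠ 0`.
-/

variable {L : Type*} [LieRing L]

/-- The ball `A^k`: `A^1 = {0} ∪ A`,
`A^k = ⋃_{0<j<k} ((A^j + A^{k-j}) ∪ [A^j, A^{k-j}])`. -/
def ball (A : Set L) : ℕ → Set L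
  | 0 => ∅
  | 1 => insert 0 A
  | (n + 2) =>
      ⋃ (j : ℕ) (_ : 0 < j) (_ : j < n + 2),
        (Set.image2 (· + ·) (ball A j) (ball A (n + 2 - j)) ∪
          Set.image2 (fun x y => ⁅x, y⁆) (ball A j) (ball A (n + 2 - j)))
  termination_by k => k
  decreasing_by all_goals omega

open LieAlgebra Module

section Ball

variable {A : Set L}

lemma pos_of_mem_ball {k : ℕ} {x : L} (hx : x ∈ ball A k) : 0 < k := by
  rcases k with _ | k
  · simp [ball] at hx
  · omega

lemma mem_ball_one {a : L} (ha : a ∈ A) : a ∈ ball A 1 := by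
  rw [ball]
  exact Set.mem_insert_of_mem _ ha

lemma zero_mem_ball_one : (0 : L) ∈ ball A 1 := by
  rw [ball]
  exact Set.mem_insert _ _

lemma union_subset_ball {j k : ℕ} (hj : 0 < j) (hjk : j < k) :
    Set.image2 (· + ·) (ball A j) (ball A (k - j)) ∪
      Set.image2 (fun x y => ⁅x, y⁆) (ball A j) (ball A (k - j)) ⊆ ball A k := by
  obtain ⟨n, rfl⟩ : ∃ n, k = n + 2 := ⟨k - 2, by omega⟩
  rw [ball]
  exact Set.subset_iUnion₂_of_subset j hj (Set.subset_iUnion_of_subset hjk subset_rfl)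

lemma add_mem_ball {m n : ℕ} {x y : L} (hx : x ∈ ball A m) (hy : y ∈ ball A n) :
    x + y ∈ ball A (m + n) := by
  have hn := pos_of_mem_ball hy
  refine union_subset_ball (pos_of_mem_ball hx) (by omega : m < m + n) (Or.inl ?_)
  exact ⟨x, hx, y, by rwa [Nat.add_sub_cancel_left], rfl⟩

lemma lie_mem_ball {m n : ℕ} {x y : L} (hx : x ∈ ball A m) (hy : y ∈ ball A n) :
    ⁅x, y⁆ ∈ ball A (m + n) := by
  have hn := pos_of_mem_ball hy
  refine union_subset_ball (pos_of_mem_ball hx) (by omega : m < m + n) (Or.inr ?_)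
  exact ⟨x, hx, y, by rwa [Nat.add_sub_cancel_left], rfl⟩

lemma monotone_ball : Monotone (ball A) :=
  monotone_nat_of_le_succ fun _ x hx => by simpa using add_mem_ball hx zero_mem_ball_one

end Ball

section LinearAlgebra

variable {K V : Type*} [DivisionRing K] [AddCommGroup V] [Module K V]

theorem Submodule.exists_lt_finrank_succ_le [FiniteDimensional K V] {W : ℕ → Submodule K V}
    (hW : Monotone W) (h0 : W 0 ≠ ⊥) : ∃ m < finrank K V, W (m + 1) ≤ W m := by
  by_contra! h
  have hrank : ∀ m ≤ finrank K V, m + 1 ≤ finrank K (W m) := by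
    intro m
    induction m with
    | zero => exact fun _ => Submodule.one_le_finrank_iff.2 h0
    | succ m ih =>
      intro hm
      have hlt := Submodule.finrank_lt_finrank_of_lt
        (lt_of_le_not_ge (hW (m.le_add_right 1)) (h m (by omega)))
      have := ih (by omega)
      omega
  have := (hrank _ le_rfl).trans (Submodule.finrank_le _)
  omega

theorem ncard_le_ncard_inter_range_smul [Finite K] {B : Set V} {S : Set K} {u : V} (hu : u ≠ 0)
    (hS : ∀ s ∈ S, s • u ∈ B) : S.ncard ≤ (B ∩ Set.range fun a : K => a • u).ncard := by
  rw [← Set.ncard_image_of_injective S (smul_left_injective K hu)]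
  refine Set.ncard_le_ncard ?_ ((Set.finite_range _).subset Set.inter_subset_right)
  rintro _ ⟨s, hs, rfl⟩
  exact ⟨hS s hs, s, rfl⟩

end LinearAlgebra

section Tower

theorem Submodule.lie_mem_of_lieSpan_eq_top {R : Type*} [CommRing R] [LieAlgebra R L]
    {A : Set L} (hA : LieSubalgebra.lieSpan R L A = ⊤) {W : Submodule R L}
    (hW : ∀ a ∈ A, ∀ y ∈ W, ⁅a, y⁆ ∈ W) (z : L) : ∀ y ∈ W, ⁅z, y⁆ ∈ W := by
  have hz : z ∈ LieSubalgebra.lieSpan R L A := hA ▸ LieSubalgebra.mem_top z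
  induction hz using LieSubalgebra.lieSpan_induction with
  | mem a ha => exact hW a ha
  | zero => intro y _; simp
  | add x₁ x₂ _ _ h₁ h₂ => intro y hy; rw [add_lie]; exact W.add_mem (h₁ y hy) (h₂ y hy)
  | smul c x _ h => intro y hy; rw [smul_lie]; exact W.smul_mem c (h y hy)
  | lie x₁ x₂ _ _ h₁ h₂ =>
    intro y hy
    rw [lie_lie]
    exact W.sub_mem (h₁ _ (h₂ y hy)) (h₂ _ (h₁ y hy))

variable {K : Type*} [Field K] [LieAlgebra K L] [IsSimple K L]
  {A : Set L} (hA : LieSubalgebra.lieSpan K L A = ⊤)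
include hA

theorem Submodule.eq_top_of_lie_mem_of_lieSpan_eq_top {W : Submodule K L} (hW₀ : W ≠ ⊥)
    (hW : ∀ a ∈ A, ∀ y ∈ W, ⁅a, y⁆ ∈ W) : W = ⊤ := by
  let I : LieIdeal K L :=
    { W with lie_mem := fun {z y} hy => Submodule.lie_mem_of_lieSpan_eq_top hA hW z y hy }
  have hI : I = ⊤ := (IsSimple.eq_bot_or_eq_top I).resolve_left fun h =>
    hW₀ ((LieSubmodule.toSubmodule_eq_bot I).2 h)
  exact (LieSubmodule.toSubmodule_eq_top I).2 hI

theorem Submodule.eq_top_of_lie_tower [FiniteDimensional K L] {W : ℕ → Submodule K L}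
    (hW : Monotone W) (hW₀ : W 0 ≠ ⊥) (hlie : ∀ m, ∀ a ∈ A, ∀ y ∈ W m, ⁅a, y⁆ ∈ W (m + 1)) :
    W (finrank K L) = ⊤ := by
  obtain ⟨m, hmd, hm⟩ := Submodule.exists_lt_finrank_succ_le hW hW₀
  have hWm : W m = ⊤ := Submodule.eq_top_of_lie_mem_of_lieSpan_eq_top hA
    (ne_bot_of_le_ne_bot hW₀ (hW m.zero_le)) fun a ha y hy => hm (hlie m a ha y hy)
  exact eq_top_iff.2 (hWm ▸ hW hmd.le)

end Tower

theorem exists_lie_ne_zero_of_span_eq_top {R : Type*} [CommRing R] [LieAlgebra R L]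
    [LieModule.IsFaithful R L L] {S : Set L} (hS : Submodule.span R S = ⊤) {v : L} (hv : v ≠ 0) :
    ∃ x ∈ S, ⁅v, x⁆ ≠ 0 := by
  by_contra! h
  have hv₀ : LieModule.toEnd R L L v = LieModule.toEnd R L L 0 := by
    rw [map_zero]
    exact LinearMap.ext_on hS fun x hx => by simpa using h x hx
  exact hv (LieModule.IsFaithful.injective_toEnd hv₀)

section BallResidual

variable {R : Type*} [CommRing R] [LieAlgebra R L]

def ballResidual (A : Set L) (X : Set R) (j : ℕ) : Set L :=
  {x | ∀ β ∈ X, β • x ∈ ball A j}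

variable {A : Set L} {X : Set R}

lemma ballResidual_subset_succ (j : ℕ) : ballResidual A X j ⊆ ballResidual A X (j + 1) :=
  fun _ hx β hβ => monotone_ball j.le_succ (hx β hβ)

lemma lie_mem_ballResidual {a x : L} {j : ℕ} (ha : a ∈ A) (hx : x ∈ ballResidual A X j) :
    ⁅a, x⁆ ∈ ballResidual A X (j + 1) := by
  intro β hβ
  rw [← lie_smul, add_comm]
  exact lie_mem_ball (mem_ball_one ha) (hx β hβ)

end BallResidual

theorem exists_lie_ne_zero_forall_smul_mem_ball {K : Type*} [Field K] [LieAlgebra K L]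
    [FiniteDimensional K L] [IsSimple K L] {A : Set L} (hA : LieSubalgebra.lieSpan K L A = ⊤)
    {k : ℕ} {X : Set K} {v : L} (hv : v ≠ 0) (hXv : ∀ α ∈ X, α • v ∈ ball A k) :
    ∃ x, ⁅v, x⁆ ≠ 0 ∧ ∀ β ∈ X, β • x ∈ ball A (k + finrank K L) := by
  let W : ℕ → Submodule K L := fun m => Submodule.span K (ballResidual A X (k + m))
  have hW : Monotone W := monotone_nat_of_le_succ fun m =>
    Submodule.span_mono (ballResidual_subset_succ (k + m))
  have hW₀ : W 0 ≠ ⊥ := fun h => hv <| (Submodule.mem_bot K).1 (h ▸ Submodule.subset_span hXv)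
  have hlie : ∀ m, ∀ a ∈ A, ∀ y ∈ W m, ⁅a, y⁆ ∈ W (m + 1) := fun m a ha y hy =>
    (Submodule.map_span_le (LieAlgebra.ad K L a) _ _).2
      (fun x hx => Submodule.subset_span (lie_mem_ballResidual ha hx)) ⟨y, hy, rfl⟩
  obtain ⟨x, hx, hvx⟩ :=
    exists_lie_ne_zero_of_span_eq_top (Submodule.eq_top_of_lie_tower hA hW hW₀ hlie) hv
  exact ⟨x, hvx, hx⟩

/-- If `A^k` contains the `X`-multiples of a nonzero `v`, where
`X = {α : αv ∈ A^k}`, then `A^{2k+d}` contains `(X+X)·v` and `(X·X)·w` for some nonzero `w`;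
consequently some line through the origin meets `A^{2k+d}` in at least
`max {|X+X|, |X·X|}` points. -/
theorem stmt17 (p : ℕ) [Fact p.Prime] [LieAlgebra (ZMod p) L] [Module.Finite (ZMod p) L]
    [LieAlgebra.IsSimple (ZMod p) L]
    (A : Set L) (hA : LieSubalgebra.lieSpan (ZMod p) L A = ⊤)
    (k : ℕ) (v : L) (hv : v ≠ 0)
    (X : Set (ZMod p)) (hX : X = {α : ZMod p | α • v ∈ ball A k}) :
    (∃ w : L, w ≠ 0 ∧
      (∀ α ∈ Set.image2 (· + ·) X X,
        α • v ∈ ball A (2 * k + Module.finrank (ZMod p) L)) ∧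
      (∀ β ∈ Set.image2 (· * ·) X X,
        β • w ∈ ball A (2 * k + Module.finrank (ZMod p) L))) ∧
    (∃ u : L, u ≠ 0 ∧
      max (Set.image2 (· + ·) X X).ncard (Set.image2 (· * ·) X X).ncard ≤
        ((ball A (2 * k + Module.finrank (ZMod p) L)) ∩
          Set.range (fun α : ZMod p => α • u)).ncard) := by
  have hXv : ∀ α ∈ X, α • v ∈ ball A k := fun α hα => by rwa [hX] at hα
  obtain ⟨x, hvx, hx⟩ := exists_lie_ne_zero_forall_smul_mem_ball hA hv hXv
  have hsum : ∀ α ∈ Set.image2 (· + ·) X X, α • v ∈ ball A (2 * k + finrank (ZMod p) L) := by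
    rintro _ ⟨a, ha, b, hb, rfl⟩
    rw [add_smul]
    exact monotone_ball (by omega) (add_mem_ball (hXv a ha) (hXv b hb))
  have hprod : ∀ β ∈ Set.image2 (· * ·) X X, β • ⁅v, x⁆ ∈ ball A (2 * k + finrank (ZMod p) L) := by
    rintro _ ⟨a, ha, b, hb, rfl⟩
    rw [mul_smul, ← lie_smul, ← smul_lie]
    exact monotone_ball (by omega) (lie_mem_ball (hXv a ha) (hx b hb))
  refine ⟨⟨_, hvx, hsum, hprod⟩, ?_⟩
  rcases le_total (Set.image2 (· * ·) X X).ncard (Set.image2 (· + ·) X X).ncard with h | h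
  · exact ⟨v, hv, (max_eq_left h).symm ▸ ncard_le_ncard_inter_range_smul hv hsum⟩
  · exact ⟨_, hvx, (max_eq_right h).symm ▸ ncard_le_ncard_inter_range_smul hvx hprod⟩
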